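/- arXiv:1105.6133 — 4 statements merged into one kernel-verified Lean document; each statement's English description precedes it below -/
import Mathlib

section
/- Let (a,b) ∈ 𝒫 satisfy the finiteness condition and let (n_k)_{k∈ℤ} be an admissible coding sequence. Then for every k ∈ ℤ: if n_k = 1 then n_{k−1} ≤ −1, and if n_k = −1 then n_{k−1} ≥ 1. -/
open MeasureTheory Filter Set

noncomputable section

/-- The parameter set 𝒫 = {(a,b) : a ≤ 0 ≤ b, b − a ≥ 1, −ab ≤ 1}. -/
def memP (a b : ℝ) : Prop := a ≤ 0 ∧ 0 ≤ b ∧ 1 ≤ b - a ∧ -(a * b) ≤ 1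

/-- Generalized integer part ⌊x⌉_{a,b}. -/
def genFloor (a b x : ℝ) : ℤ :=
  if x < a then ⌊x - a⌋ else if x < b then 0 else ⌊x - b⌋ + 1

/-- Iterates x_k of the (a,b)-continued fraction algorithm. -/
def cfIter (a b x : ℝ) : ℕ → ℝ
  | 0 => x
  | k + 1 => -1 / (cfIter a b x k - (genFloor a b (cfIter a b x k) : ℝ))

/-- The digits n_k(x) of the (a,b)-continued fraction expansion. -/
def digit (a b x : ℝ) (k : ℕ) : ℤ := genFloor a b (cfIter a b x k)

/-- Evaluation of a finite "minus" continued fraction n₀ − 1/(n₁ − 1/(⋯ − 1/n_k)). -/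
def mcfEval : List ℤ → ℝ
  | [] => 0
  | [n] => (n : ℝ)
  | n :: l => (n : ℝ) - 1 / mcfEval l

/-- The k-th convergent r_k(x) of the (a,b)-continued fraction expansion. -/
def convergent (a b x : ℝ) (k : ℕ) : ℝ :=
  mcfEval ((List.range (k + 1)).map fun i => digit a b x i)

/-- The natural extension map F_{a,b}. -/
def Fab (a b : ℝ) (p : ℝ × ℝ) : ℝ × ℝ :=
  if p.2 < a then (p.1 + 1, p.2 + 1)
  else if p.2 < b then (-1 / p.1, -1 / p.2)
  else (p.1 - 1, p.2 - 1)

/-- The attractor D_{a,b} = ⋂ₙ F_{a,b}ⁿ(ℝ² ∖ Δ). -/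
def Dab (a b : ℝ) : Set (ℝ × ℝ) :=
  ⋂ n : ℕ, (Fab a b)^[n] '' {p : ℝ × ℝ | p.1 ≠ p.2}

/-- Λ_{a,b} = {(−1/u, −1/w) : (u,w) ∈ D_{a,b}, a ≤ w ≤ b}. -/
def Lam (a b : ℝ) : Set (ℝ × ℝ) :=
  {q | ∃ p ∈ Dab a b, a ≤ p.2 ∧ p.2 ≤ b ∧ q = (-1 / p.1, -1 / p.2)}

/-- The reduction map R_{a,b}(u,w) = (−1/(u−n), −1/(w−n)), n = n₀(w). -/
def Rab (a b : ℝ) (p : ℝ × ℝ) : ℝ × ℝ :=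
  (-1 / (p.1 - (genFloor a b p.2 : ℝ)), -1 / (p.2 - (genFloor a b p.2 : ℝ)))

/-- The map f_{a,b}. -/
def fab (a b x : ℝ) : ℝ :=
  if x < a then x + 1 else if x < b then -1 / x else x - 1

/-- A forward orbit being eventually periodic. -/
def EvPer (g : ℝ → ℝ) (x : ℝ) : Prop := ∃ i j : ℕ, i < j ∧ g^[i] x = g^[j] x

/-- The finiteness condition for the pair (a,b). -/
def FinenessCondition (a b : ℝ) : Prop :=
  ((EvPer (fab a b) (-1 / a) ∧ EvPer (fab a b) (a + 1)) ∨
    ∃ m k : ℕ, (fab a b)^[m] (-1 / a) = (fab a b)^[k] (a + 1)) ∧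
  ((EvPer (fab a b) (b - 1) ∧ EvPer (fab a b) (-1 / b)) ∨
    ∃ m k : ℕ, (fab a b)^[m] (b - 1) = (fab a b)^[k] (-1 / b))

/-- The measure ρ with density 1/(w−u)² w.r.t. Lebesgue measure du dw. -/
def rho : Measure (ℝ × ℝ) :=
  volume.withDensity fun p => ENNReal.ofReal (1 / (p.2 - p.1) ^ 2)

/-- An orbit (u_k, w_k) in Λ_{a,b} realizing a bi-infinite coding sequence (n_k). -/
def IsCodingOrbit (a b : ℝ) (n : ℤ → ℤ) (u w : ℤ → ℝ) : Prop :=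
  (∀ k, (u k, w k) ∈ Lam a b) ∧ (∀ k, Irrational (w k)) ∧
  (∀ k, n k = genFloor a b (w k)) ∧
  (∀ k : ℤ, u (k + 1) = -1 / (u k - (n k : ℝ)) ∧ w (k + 1) = -1 / (w k - (n k : ℝ)))

/-- Admissible coding sequences. -/
def Admissible (a b : ℝ) (n : ℤ → ℤ) : Prop :=
  (∀ k, n k ≠ 0) ∧ ∃ u w : ℤ → ℝ, IsCodingOrbit a b n u w

/-- The reflection ψ(x,y) = (−y,−x). -/
def psi (p : ℝ × ℝ) : ℝ × ℝ := (-p.2, -p.1)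

/-- (a′,b′) is dual to (a,b) if ψ(D_{a,b}) = D_{a′,b′}. -/
def IsDual (a b a' b' : ℝ) : Prop := psi '' Dab a b = Dab a' b'

/-- The Gauss-type map f̂_{a,b}. -/
def fhat (a b x : ℝ) : ℝ :=
  if x = 0 then 0 else -1 / x - (genFloor a b (-1 / x) : ℝ)

/-- The natural extension F̂_{a,b} of the Gauss-type map. -/
def Fhat (a b : ℝ) (p : ℝ × ℝ) : ℝ × ℝ :=
  (fhat a b p.1, -1 / (p.2 - (genFloor a b (-1 / p.1) : ℝ)))

/-- Λ̂_{a,b} = {(−1/w, u) : (u,w) ∈ Λ_{a,b}}. -/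
def LamHat (a b : ℝ) : Set (ℝ × ℝ) := {q | ∃ p ∈ Lam a b, q = (-1 / p.2, p.1)}

/-- The normalizing constant K_{a,b} = ∫_{Λ̂_{a,b}} dx dy/(1+xy)². -/
def Kab (a b : ℝ) : ENNReal :=
  ∫⁻ p in LamHat a b, ENNReal.ofReal (1 / (1 + p.1 * p.2) ^ 2)

/-- The invariant probability measure ν_{a,b} of F̂_{a,b}. -/
def nuab (a b : ℝ) : Measure (ℝ × ℝ) :=
  (Kab a b)⁻¹ •
    ((volume.restrict (LamHat a b)).withDensity fun p => ENNReal.ofReal (1 / (1 + p.1 * p.2) ^ 2))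

/-- The invariant probability measure μ_{a,b} of f̂_{a,b}: pushforward of ν_{a,b} by (x,y) ↦ x. -/
def muab (a b : ℝ) : Measure ℝ := (nuab a b).map Prod.fst

/-- Denominators of the convergents, shifted by one: qden 0 = q₋₁ = 0, qden (k+1) = q_k. -/
def qden (a b x : ℝ) : ℕ → ℤ
  | 0 => 0
  | 1 => 1
  | k + 2 => digit a b x (k + 1) * qden a b x (k + 1) - qden a b x k

/-- The sequence c_p: cseq b (p−1) = c_p, so c₁ = b−1 and c_{p+1} = −1/c_p − 2. -/
def cseq (b : ℝ) : ℕ → ℝ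
  | 0 => b - 1
  | p + 1 => -1 / cseq b p - 2

/-- The function h⁺_{a,b}. -/
def hplus (a b : ℝ) (m : ℕ) (x : ℝ) : ℝ :=
  (∑ p ∈ Finset.Icc 1 (m - 1),
    Set.indicator (Set.Ico (cseq b (p - 1)) (cseq b p)) (fun t => 1 / (t + ((p : ℝ) + 1) / p)) x)
  + Set.indicator (Set.Ico (cseq b (m - 1)) (-1 / a - 1)) (fun t => 1 / (t + ((m : ℝ) + 1) / m)) x
  + Set.indicator (Set.Ico (-1 / a - 1) b) (fun t => 1 / (t + 1)) x

/-- The function h⁻_{a,b}. -/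
def hminus (a b : ℝ) (m : ℕ) (x : ℝ) : ℝ :=
  Set.indicator (Set.Ico a (-1 / b + m)) (fun t => 1 / ((m : ℝ) - t)) x
  + Set.indicator (Set.Ico (-1 / b + m) (a + 1)) (fun t => 1 / ((m : ℝ) + 1 - t)) x

lemma gf_pos {a b x : ℝ} {m : ℤ} (h : genFloor a b x = m) (hm : 1 ≤ m) :
    b + (m : ℝ) - 1 ≤ x ∧ x < b + (m : ℝ) := by
  unfold genFloor at h
  split_ifs at h with h1 h2
  · exfalso
    rw [Int.floor_eq_iff] at h
    have : (1 : ℝ) ≤ (m : ℝ) := by exact_mod_cast hm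
    linarith [h.1]
  · omega
  · have h' : ⌊x - b⌋ = m - 1 := by omega
    rw [Int.floor_eq_iff] at h'
    push_cast at h'
    constructor <;> linarith [h'.1, h'.2]

lemma gf_neg {a b x : ℝ} {m : ℤ} (h : genFloor a b x = m) (hm : m ≤ -1) :
    a + (m : ℝ) ≤ x ∧ x < a + (m : ℝ) + 1 := by
  unfold genFloor at h
  split_ifs at h with h1 h2
  · rw [Int.floor_eq_iff] at h
    constructor <;> [linarith [h.1]; linarith [h.2]]
  · omega
  · exfalso
    push_neg at h1 h2
    have h0 : 0 ≤ ⌊x - b⌋ := Int.floor_nonneg.mpr (by linarith)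
    omega

theorem stmt4 (a b : ℝ) (hP : memP a b) (hfin : FinenessCondition a b)
    (n : ℤ → ℤ) (hadm : Admissible a b n) :
    ∀ k : ℤ, (n k = 1 → n (k - 1) ≤ -1) ∧ (n k = -1 → 1 ≤ n (k - 1)) := by
  obtain ⟨hne, u, w, hLam, hirr, hdig, hrec⟩ := hadm
  have ha : a ≤ 0 := hP.1
  have hb : 0 ≤ b := hP.2.1
  intro k
  have hrec' : w k = -1 / (w (k - 1) - (n (k - 1) : ℝ)) := by
    have h := (hrec (k - 1)).2
    have hk1 : k - 1 + 1 = k := by ring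
    rwa [hk1] at h
  have hwne : w k ≠ 0 := fun h => (hirr k) ⟨0, by simp [h]⟩
  constructor
  · intro hk
    have hwk : b ≤ w k ∧ w k < b + 1 := by
      have h := (hdig k).symm.trans hk
      have := gf_pos h le_rfl
      push_cast at this
      constructor <;> linarith [this.1, this.2]
    by_contra hcon
    push_neg at hcon
    have hm1 : 1 ≤ n (k - 1) := by have := hne (k - 1); omega
    set m : ℤ := n (k - 1) with hmdef
    have hw1 := gf_pos (hdig (k - 1)).symm hm1
    set t : ℝ := w (k - 1) - (m : ℝ) with ht
    have hwkpos : 0 < w k := lt_of_le_of_ne (le_trans hb hwk.1) (Ne.symm hwne)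
    have htneg : t < 0 := by
      by_contra hle
      push_neg at hle
      have : w k ≤ 0 := by
        rw [hrec']
        exact div_nonpos_iff.mpr (Or.inr (by constructor <;> linarith))
      linarith
    have hmul : w k * t = -1 := by
      rw [hrec']
      exact div_mul_cancel₀ (-1 : ℝ) htneg.ne
    have hm1' : (1 : ℝ) ≤ (m : ℝ) := by exact_mod_cast hm1
    nlinarith [hwk.1, hwk.2, hw1.1, hw1.2, mul_lt_mul_of_neg_right hwk.2 htneg,
      mul_le_mul_of_nonneg_left (show b - 1 ≤ t by linarith [hw1.1])
        (show (0 : ℝ) ≤ b + 1 by linarith)]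
  · intro hk
    have hwk : a - 1 ≤ w k ∧ w k < a := by
      have h := (hdig k).symm.trans hk
      have := gf_neg h le_rfl
      push_cast at this
      constructor <;> linarith [this.1, this.2]
    by_contra hcon
    push_neg at hcon
    have hm1 : n (k - 1) ≤ -1 := by have := hne (k - 1); omega
    set m : ℤ := n (k - 1) with hmdef
    have hw1 := gf_neg (hdig (k - 1)).symm hm1
    set t : ℝ := w (k - 1) - (m : ℝ) with ht
    have hwkneg : w k < 0 := lt_of_lt_of_le hwk.2 ha
    have htpos : 0 < t := by
      by_contra hle
      push_neg at hle
      rcases eq_or_lt_of_le hle with heq | hlt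
      · rw [hrec', heq] at hwkneg
        norm_num at hwkneg
      · have : 0 < w k := by
          rw [hrec']
          exact div_pos_iff.mpr (Or.inr (by constructor <;> linarith))
        linarith
    have hmul : w k * t = -1 := by
      rw [hrec']
      exact div_mul_cancel₀ (-1 : ℝ) htpos.ne'
    have hm1' : (m : ℝ) ≤ -1 := by exact_mod_cast hm1
    nlinarith [hwk.1, hwk.2, hw1.1, hw1.2,
      mul_le_mul_of_nonneg_right hwk.1 htpos.le,
      mul_lt_mul_of_neg_left (show t < a + 1 by linarith [hw1.2])
        (show a - 1 < 0 by linarith)]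
end
end

section
/- Let (a,b) ∈ 𝒫 with −1 ≤ a < 0, b ≥ 1, and ab > −1. Then for every x with a < x < 0 one has b − 1 ≤ f̂_{a,b}(x) < b and |x · f̂_{a,b}(x)| ≤ |ab| < 1. -/
open MeasureTheory Filter Set

noncomputable section

theorem stmt14 (a b : ℝ) (hP : memP a b) (ha1 : -1 ≤ a) (ha : a < 0) (hb : 1 ≤ b)
    (hab : -1 < a * b) :
    ∀ x : ℝ, a < x → x < 0 →
      b - 1 ≤ fhat a b x ∧ fhat a b x < b ∧ |x * fhat a b x| ≤ |a * b| ∧ |a * b| < 1 := by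
  intro x hax hx0
  have hxne : x ≠ 0 := ne_of_lt hx0
  set y : ℝ := -1 / x with hy
  have hnx : (0:ℝ) < -x := by linarith
  have hna : (0:ℝ) < -a := by linarith
  have hya : -1 / a < y := by
    have h := one_div_lt_one_div_of_lt hnx (by linarith : -x < -a)
    rw [hy]
    calc -1 / a = 1 / (-a) := by ring
    _ < 1 / (-x) := h
    _ = -1 / x := by ring
  have hba : b < -1 / a := by
    have : b < 1 / (-a) := (lt_div_iff₀ hna).2 (by nlinarith)
    linarith [this, (by ring : (1:ℝ) / (-a) = -1 / a)]
  have hyb : b < y := lt_trans hba hya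
  have hfh : fhat a b x = y - ⌊y - b⌋ - 1 := by
    rw [fhat, if_neg hxne, genFloor, if_neg (by linarith), if_neg (by linarith)]
    push_cast; ring
  have hfl := Int.sub_one_lt_floor (y - b)
  have hfl2 := Int.floor_le (y - b)
  have h1 : b - 1 ≤ fhat a b x := by rw [hfh]; linarith
  have h2 : fhat a b x < b := by rw [hfh]; linarith
  refine ⟨h1, h2, ?_, ?_⟩
  · have hab0 : a * b < 0 := mul_neg_of_neg_of_pos ha (by linarith)
    rw [abs_of_neg hab0, abs_of_nonpos (mul_nonpos_of_nonpos_of_nonneg (le_of_lt hx0) (by linarith))]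
    nlinarith
  · have hab0 : a * b < 0 := mul_neg_of_neg_of_pos ha (by linarith)
    rw [abs_of_neg hab0]; linarith
end
end

section
/- Let (a,b) ∈ 𝒫 with −1 ≤ a < 0 and b ≥ 1. Then there exist an integer N ≥ 1 and a real γ > 1 such that for every x ∈ (a,b) at which the N-th iterate f̂_{a,b}^N is differentiable, |(f̂_{a,b}^N)′(x)| ≥ γ. -/
open MeasureTheory Filter Set

noncomputable section

/-!
On each branch `f̂` is `x ↦ -1/x - n`, so wherever the first `N` iterates avoid the branch
points, `(f̂ᴺ)' = ∏ₖ (f̂ᵏ x)⁻²`. Along an orbit in `[a, b)`, a point of `(0, a + 1]` has modulus at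
most `a + 1`, a negative point `x` and its image `y ∈ [b - 1, b)` satisfy `|x y| ≤ b / (b + 1)`,
and every point of `[0, b)` is mapped into `[a, a + 1]`; hence `∏ₖ |f̂ᵏ x|` decays geometrically
and the derivative of `f̂ᴺ` eventually exceeds `4`.

Since `f̂` is right-continuous and increasing on each branch, this estimate holds on a right
neighbourhood of any `x` whose orbit avoids `0`, and the mean value theorem carries it to `x`.
If instead the orbit reaches `0` before time `N`, then `f̂ᴺ` is not even right-continuous at `x`:
arbitrarily close to the right of `0`, `f̂` takes an irrational value, whose orbit never
reaches `0 = f̂ 0`.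
-/

open Topology

theorem hasDerivAt_iterate_of_forall {𝕜 : Type*} [NontriviallyNormedField 𝕜] {f f' : 𝕜 → 𝕜}
    {x : 𝕜} {N : ℕ} (h : ∀ k < N, HasDerivAt f (f' (f^[k] x)) (f^[k] x)) :
    HasDerivAt f^[N] (∏ k ∈ Finset.range N, f' (f^[k] x)) x := by
  induction N generalizing x with
  | zero => simpa using hasDerivAt_id x
  | succ N ih =>
    rw [Function.iterate_succ, Finset.prod_range_succ']
    simp only [Function.iterate_succ_apply]
    have htail : ∀ k < N, HasDerivAt f (f' (f^[k] (f x))) (f^[k] (f x)) := fun k hk => by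
      simpa only [Function.iterate_succ_apply] using h (k + 1) (by omega)
    exact (ih htail).comp x (by simpa using h 0 (by omega))

theorem le_of_hasDerivAt_of_eventually_nhdsGT {g : ℝ → ℝ} {x d C : ℝ} (hd : HasDerivAt g d x)
    (h : ∀ᶠ t in 𝓝[>] x, DifferentiableAt ℝ g t ∧ C ≤ deriv g t) : C ≤ d := by
  obtain ⟨ε, hε, hsub⟩ := mem_nhdsGT_iff_exists_Ioo_subset.1 h
  have hslope : ∀ t ∈ Ioo x ε, C ≤ slope g x t := fun t ht => by
    have hcont : ContinuousOn g (Icc x t) := fun s hs => by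
      rcases hs.1.eq_or_lt with rfl | hxs
      · exact hd.continuousAt.continuousWithinAt
      · exact (hsub ⟨hxs, hs.2.trans_lt ht.2⟩).1.continuousAt.continuousWithinAt
    obtain ⟨ξ, hξ, hξeq⟩ := exists_deriv_eq_slope g ht.1 hcont
      fun s hs => (hsub ⟨hs.1, hs.2.trans ht.2⟩).1.differentiableWithinAt
    rw [slope_def_field, ← hξeq]
    exact (hsub ⟨hξ.1, hξ.2.trans ht.2⟩).2
  exact ge_of_tendsto ((hasDerivWithinAt_iff_tendsto_slope' self_notMem_Ioi).1
    (hd.hasDerivWithinAt (s := Ioi x))) (eventually_of_mem (Ioo_mem_nhdsGT hε) hslope)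

lemma four_le_prod_inv_sq {ι : Type*} {s : Finset ι} {y : ι → ℝ} (hy : ∀ i ∈ s, y i ≠ 0)
    (h : ∏ i ∈ s, |y i| ≤ 1 / 2) : 4 ≤ ∏ i ∈ s, (y i ^ 2)⁻¹ := by
  have hpos : 0 < ∏ i ∈ s, |y i| := Finset.prod_pos fun i hi => abs_pos.2 (hy i hi)
  rw [Finset.prod_inv_distrib, ← Finset.prod_congr rfl fun i _ => sq_abs (y i),
    Finset.prod_pow]
  calc (4 : ℝ) = (1 / 4)⁻¹ := by norm_num
    _ ≤ ((∏ i ∈ s, |y i|) ^ 2)⁻¹ := inv_anti₀ (by positivity) (by nlinarith)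

lemma neg_one_div_involutive : Function.Involutive fun s : ℝ => -1 / s := fun s => by
  simp [neg_div]

lemma tendsto_neg_one_div_nhdsGT {x : ℝ} (hx : x ≠ 0) :
    Tendsto (fun s : ℝ => -1 / s) (𝓝[>] x) (𝓝[>] (-1 / x)) := by
  refine tendsto_nhdsWithin_of_tendsto_nhds_of_eventually_within _
    ((continuousAt_const.div continuousAt_id hx).mono_left nhdsWithin_le_nhds) ?_
  have hsign : ∀ᶠ s in 𝓝[>] x, 0 < x * s :=
    nhdsWithin_le_nhds <| (continuousAt_const.mul continuousAt_id).eventually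
      (lt_mem_nhds (mul_self_pos.2 hx))
  filter_upwards [hsign, self_mem_nhdsWithin] with s hs (hxs : x < s)
  have hs0 : s ≠ 0 := by rintro rfl; simp at hs
  have : -1 / s - -1 / x = (s - x) / (x * s) := by field_simp; ring
  show -1 / x < -1 / s
  linarith [div_pos (sub_pos.2 hxs) hs]

lemma map_neg_one_div_nhdsGT {x : ℝ} (hx : x ≠ 0) :
    map (fun s : ℝ => -1 / s) (𝓝[>] x) = 𝓝[>] (-1 / x) := by
  refine le_antisymm (tendsto_neg_one_div_nhdsGT hx) ?_
  have h := map_mono (m := fun s : ℝ => -1 / s)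
    (tendsto_neg_one_div_nhdsGT (x := -1 / x) (by simpa using hx))
  have hx' : -1 / (-1 / x) = x := neg_one_div_involutive x
  rwa [map_map, neg_one_div_involutive.comp_self, map_id, hx'] at h

lemma genFloor_eventually_eq_nhdsGE (a b y : ℝ) :
    ∀ᶠ z in 𝓝[≥] y, genFloor a b z = genFloor a b y := by
  have floor_eq (c : ℝ) : ∀ᶠ z in 𝓝[≥] y, ⌊z - c⌋ = ⌊y - c⌋ := by
    filter_upwards [Ico_mem_nhdsGE (by linarith [Int.lt_floor_add_one (y - c)] :
      y < ⌊y - c⌋ + 1 + c)] with z hz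
    rw [Int.floor_eq_iff]
    constructor <;> linarith [Int.floor_le (y - c), hz.1, hz.2]
  have lt_iff (c : ℝ) : ∀ᶠ z in 𝓝[≥] y, (z < c ↔ y < c) := by
    by_cases hy : y < c
    · filter_upwards [nhdsWithin_le_nhds (Iio_mem_nhds hy)] with z hz
      exact iff_of_true hz hy
    · filter_upwards [self_mem_nhdsWithin] with z (hz : y ≤ z)
      exact iff_of_false (by linarith) hy
  filter_upwards [floor_eq a, floor_eq b, lt_iff a, lt_iff b] with z h₁ h₂ h₃ h₄
  simp only [genFloor, h₁, h₂, h₃, h₄]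

section

variable {a b : ℝ}

lemma fhat_eventuallyEq_nhdsGT {x : ℝ} (hx : x ≠ 0) :
    fhat a b =ᶠ[𝓝[>] x] fun s => -1 / s - genFloor a b (-1 / x) := by
  filter_upwards [(tendsto_neg_one_div_nhdsGT hx).eventually
      ((genFloor_eventually_eq_nhdsGE a b _).filter_mono (nhdsWithin_mono _ Ioi_subset_Ici_self)),
    (eventually_ne_nhds hx).filter_mono nhdsWithin_le_nhds] with s hs hs0
  rw [fhat, if_neg hs0, hs]

lemma map_fhat_nhdsGT {x : ℝ} (hx : x ≠ 0) : map (fhat a b) (𝓝[>] x) = 𝓝[>] (fhat a b x) := by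
  have hcomp : (fun s : ℝ => -1 / s - genFloor a b (-1 / x)) =
      (· - (genFloor a b (-1 / x) : ℝ)) ∘ fun s => -1 / s := rfl
  rw [map_congr (fhat_eventuallyEq_nhdsGT hx), fhat, if_neg hx, hcomp, ← map_map,
    map_neg_one_div_nhdsGT hx, map_subRight_nhdsGT]

lemma map_iterate_fhat_nhdsGT {x : ℝ} {N : ℕ} (h : ∀ k < N, (fhat a b)^[k] x ≠ 0) :
    map (fhat a b)^[N] (𝓝[>] x) = 𝓝[>] ((fhat a b)^[N] x) := by
  induction N with
  | zero => simp
  | succ N ih =>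
    rw [Function.iterate_succ_apply', Function.iterate_succ', ← map_map,
      ih fun k hk => h k (by omega), map_fhat_nhdsGT (h N (by omega))]

lemma eventually_hasDerivAt_fhat {x : ℝ} (hx : x ≠ 0) :
    ∀ᶠ t in 𝓝[>] x, t ≠ 0 ∧ HasDerivAt (fhat a b) (t ^ 2)⁻¹ t := by
  filter_upwards [eventually_eventually_nhdsWithin.2 (fhat_eventuallyEq_nhdsGT hx),
    (eventually_ne_nhds hx).filter_mono nhdsWithin_le_nhds, self_mem_nhdsWithin]
    with t hgerm ht0 hxt
  rw [isOpen_Ioi.nhdsWithin_eq hxt] at hgerm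
  refine ⟨ht0, HasDerivAt.congr_of_eventuallyEq ?_ hgerm⟩
  simpa [neg_div] using (hasDerivAt_inv ht0).neg.sub_const (genFloor a b (-1 / x) : ℝ)

lemma eventually_hasDerivAt_iterate_fhat {x : ℝ} {N : ℕ} (h : ∀ k < N, (fhat a b)^[k] x ≠ 0) :
    ∀ᶠ t in 𝓝[>] x, (∀ k < N, (fhat a b)^[k] t ≠ 0) ∧
      HasDerivAt (fhat a b)^[N] (∏ k ∈ Finset.range N, (((fhat a b)^[k] t) ^ 2)⁻¹) t := by
  have hk : ∀ k ∈ {k | k < N}, ∀ᶠ t in 𝓝[>] x, (fhat a b)^[k] t ≠ 0 ∧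
      HasDerivAt (fhat a b) (((fhat a b)^[k] t) ^ 2)⁻¹ ((fhat a b)^[k] t) := fun k hk => by
    have := eventually_hasDerivAt_fhat (a := a) (b := b) (h k hk)
    rwa [← map_iterate_fhat_nhdsGT fun j hj => h j (hj.trans hk)] at this
  filter_upwards [(eventually_all_finite (finite_lt_nat N)).2 hk] with t ht
  exact ⟨fun k hk => (ht k hk).1,
    hasDerivAt_iterate_of_forall (f' := fun s => (s ^ 2)⁻¹) fun k hk => (ht k hk).2⟩

lemma fhat_zero : fhat a b 0 = 0 := if_pos rfl

lemma Irrational.fhat {x : ℝ} (hx : Irrational x) : Irrational (fhat a b x) := by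
  rw [_root_.fhat, if_neg hx.ne_zero, neg_div, one_div]
  exact hx.inv.neg.sub_intCast _

lemma Irrational.iterate_fhat {x : ℝ} (hx : Irrational x) (n : ℕ) :
    Irrational ((_root_.fhat a b)^[n] x) := by
  induction n with
  | zero => exact hx
  | succ n ih => rw [Function.iterate_succ_apply']; exact ih.fhat

lemma not_continuousWithinAt_iterate_fhat_zero (ha : a ≤ 0) (M : ℕ) :
    ¬ContinuousWithinAt (fhat a b)^[M + 1] (Ioi 0) 0 := by
  obtain ⟨v, hv, hav, hva⟩ := exists_irrational_btwn (lt_add_one a)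
  have hpos (j : ℕ) : 0 < (j : ℝ) + (1 - v) := by linarith [(j.cast_nonneg : (0 : ℝ) ≤ j)]
  have hfv (j : ℕ) : fhat a b ((j : ℝ) + (1 - v))⁻¹ = v := by
    have hj : -1 / ((j : ℝ) + (1 - v))⁻¹ = v - ((j + 1 : ℕ) : ℝ) := by push_cast; field_simp; ring
    have hfloor : ⌊v - ((j + 1 : ℕ) : ℝ) - a⌋ = -((j + 1 : ℕ) : ℤ) := by
      rw [sub_right_comm, Int.floor_sub_natCast, Int.floor_eq_zero_iff.2 ⟨by linarith, by linarith⟩]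
      simp
    rw [_root_.fhat, if_neg (inv_pos.2 (hpos j)).ne', hj, genFloor,
      if_pos (by push_cast; linarith), hfloor]
    push_cast; ring
  have ht : Tendsto (fun j : ℕ => ((j : ℝ) + (1 - v))⁻¹) atTop (𝓝[>] 0) :=
    tendsto_inv_atTop_nhdsGT_zero.comp
      (tendsto_atTop_add_const_right _ _ tendsto_natCast_atTop_atTop)
  intro hcont
  have hlim := hcont.tendsto.comp ht
  simp only [Function.comp_def, Function.iterate_succ_apply, hfv] at hlim
  rw [fhat_zero, Function.iterate_fixed fhat_zero] at hlim
  exact (hv.iterate_fhat M).ne_zero (tendsto_nhds_unique tendsto_const_nhds hlim)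

lemma not_continuousWithinAt_iterate_fhat_of_iterate_eq_zero (ha : a ≤ 0) {x : ℝ} {K N : ℕ}
    (hK : (fhat a b)^[K] x = 0) (hKN : K < N) :
    ¬ContinuousWithinAt (fhat a b)^[N] (Ioi x) x := by
  classical
  have hex : ∃ k, (fhat a b)^[k] x = 0 := ⟨K, hK⟩
  obtain ⟨M, hM⟩ : ∃ M, N = M + 1 + Nat.find hex := ⟨N - Nat.find hex - 1, by
    have := Nat.find_min' hex hK; omega⟩
  have hmap := map_iterate_fhat_nhdsGT fun k hk => Nat.find_min hex hk
  rw [Nat.find_spec hex] at hmap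
  intro hcont
  apply not_continuousWithinAt_iterate_fhat_zero ha M
  have hcomp : Tendsto ((fhat a b)^[M + 1] ∘ (fhat a b)^[Nat.find hex]) (𝓝[>] x)
      (𝓝 ((fhat a b)^[M + 1] ((fhat a b)^[Nat.find hex] x))) := by
    rw [← Function.iterate_add, ← Function.iterate_add_apply, ← hM]
    exact hcont
  rwa [← tendsto_map'_iff, hmap, Nat.find_spec hex] at hcomp

lemma neg_one_div_lt_of_mem_Ioo (hab : -(a * b) ≤ 1) (ha : a < 0) {x : ℝ} (hx : x ∈ Ioo 0 b) :
    -1 / x < a := by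
  rw [div_lt_iff₀ hx.1]
  nlinarith [hx.1, hx.2]

lemma fhat_mem_Ico_of_mem_Ioo (hab : -(a * b) ≤ 1) (ha : a < 0) {x : ℝ} (hx : x ∈ Ioo 0 b) :
    fhat a b x ∈ Ico a (a + 1) := by
  have hfract : fhat a b x = a + Int.fract (-1 / x - a) := by
    rw [fhat, if_neg hx.1.ne', genFloor, if_pos (neg_one_div_lt_of_mem_Ioo hab ha hx), Int.fract]
    ring
  rw [hfract]
  exact ⟨by linarith [Int.fract_nonneg (-1 / x - a)], by linarith [Int.fract_lt_one (-1 / x - a)]⟩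

lemma le_neg_one_div_of_mem_Ico (hab : -(a * b) ≤ 1) (hb : 0 ≤ b) {x : ℝ} (hx : x ∈ Ico a 0) :
    b ≤ -1 / x := by
  rw [le_div_iff_of_neg hx.2]
  nlinarith [hx.1, hx.2]

lemma fhat_eq_of_mem_Ico (hab : -(a * b) ≤ 1) (ha : a < 0) (hb : 0 ≤ b) {x : ℝ}
    (hx : x ∈ Ico a 0) : fhat a b x = b - 1 + Int.fract (-1 / x - b) := by
  have h := le_neg_one_div_of_mem_Ico hab hb hx
  rw [fhat, if_neg hx.2.ne, genFloor, if_neg (by linarith), if_neg (by linarith), Int.fract]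
  push_cast
  ring

lemma fhat_mem_Ico_of_mem_Ico (hab : -(a * b) ≤ 1) (ha : a < 0) (hb : 0 ≤ b) {x : ℝ}
    (hx : x ∈ Ico a 0) : fhat a b x ∈ Ico (b - 1) b := by
  rw [fhat_eq_of_mem_Ico hab ha hb hx]
  exact ⟨by linarith [Int.fract_nonneg (-1 / x - b)], by linarith [Int.fract_lt_one (-1 / x - b)]⟩

lemma abs_mul_fhat_le (hab : -(a * b) ≤ 1) (ha : a < 0) (hb : 1 ≤ b) {x : ℝ}
    (hx : x ∈ Ico a 0) : |x * fhat a b x| ≤ b / (b + 1) := by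
  have hy := fhat_mem_Ico_of_mem_Ico hab ha (by linarith) hx
  have hn : (0 : ℝ) ≤ ⌊-1 / x - b⌋ := by
    exact_mod_cast Int.floor_nonneg.2
      (sub_nonneg.2 (le_neg_one_div_of_mem_Ico hab (by linarith) hx))
  have hxy : x * fhat a b x = -1 - x * (⌊-1 / x - b⌋ + 1) := by
    rw [fhat_eq_of_mem_Ico hab ha (by linarith) hx, Int.fract]
    field_simp [hx.2.ne]
    ring
  have hsmall : -(x * fhat a b x) ≤ -x * b := by nlinarith [hy.2, hx.2]
  have hnear : -(x * fhat a b x) ≤ 1 + x := by rw [hxy]; nlinarith [hx.2]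
  rw [abs_of_nonpos (mul_nonpos_of_nonpos_of_nonneg hx.2.le (by linarith [hy.1])),
    le_div_iff₀ (by linarith)]
  -- `hsmall + b * hnear`
  nlinarith

lemma fhat_mem_Icc_of_mem_Ico (hab : -(a * b) ≤ 1) (ha1 : -1 ≤ a) (ha : a < 0) {y : ℝ}
    (hy : y ∈ Ico 0 b) : fhat a b y ∈ Icc a (a + 1) := by
  rcases hy.1.eq_or_lt with rfl | hy0
  · rw [fhat_zero]
    exact ⟨ha.le, by linarith⟩
  · exact Ico_subset_Icc_self (fhat_mem_Ico_of_mem_Ioo hab ha ⟨hy0, hy.2⟩)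

/-- A point of `[a, 0)` together with its image, or a point of `(0, a + 1]` alone, contributes
at most this factor to `∏ |f̂ᵏ x|`. -/
def contractionRate (a b : ℝ) : ℝ := max (b / (b + 1)) (a + 1)

lemma contractionRate_nonneg (hb : 0 ≤ b) : 0 ≤ contractionRate a b :=
  le_max_of_le_left (by positivity)

lemma contractionRate_lt_one (ha : a < 0) (hb : 0 ≤ b) : contractionRate a b < 1 :=
  max_lt ((div_lt_one (by linarith)).2 (by linarith)) (by linarith)

lemma prod_abs_iterate_fhat_le_of_mem_Icc (hab : -(a * b) ≤ 1) (ha1 : -1 ≤ a) (ha : a < 0)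
    (hb : 1 ≤ b) : ∀ (N : ℕ) {x : ℝ}, x ∈ Icc a (a + 1) →
      ∏ k ∈ Finset.range N, |(fhat a b)^[k] x| ≤ contractionRate a b ^ (N / 2)
  | 0, _, _ => by simp
  | 1, x, hx => by simpa [abs_le] using ⟨by linarith [hx.1], by linarith [hx.2]⟩
  | N + 2, x, hx => by
    have hc0 : 0 ≤ contractionRate a b := contractionRate_nonneg (by linarith)
    have hc1 : contractionRate a b ≤ 1 := (contractionRate_lt_one ha (by linarith)).le
    rcases lt_trichotomy x 0 with hx0 | rfl | hx0
    · have hfx := fhat_mem_Ico_of_mem_Ico hab ha (by linarith) ⟨hx.1, hx0⟩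
      have hffx := fhat_mem_Icc_of_mem_Ico hab ha1 ha ⟨by linarith [hfx.1], hfx.2⟩
      rw [Finset.prod_range_succ', Finset.prod_range_succ', mul_assoc]
      simp only [Function.iterate_succ_apply, Function.iterate_zero_apply]
      calc _ ≤ contractionRate a b ^ (N / 2) * contractionRate a b := by
            refine mul_le_mul (prod_abs_iterate_fhat_le_of_mem_Icc hab ha1 ha hb N hffx) ?_
              (by positivity) (by positivity)
            rw [← abs_mul, mul_comm]
            exact (abs_mul_fhat_le hab ha hb ⟨hx.1, hx0⟩).trans (le_max_left _ _)
        _ = contractionRate a b ^ ((N + 2) / 2) := by rw [← pow_succ]; congr 1; omega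
    · exact (Finset.prod_eq_zero (Finset.mem_range.2 (by omega : 0 < N + 2)) (by simp)).trans_le
        (by positivity)
    · have hfx := fhat_mem_Icc_of_mem_Ico hab ha1 ha ⟨hx0.le, by linarith [hx.2]⟩
      rw [Finset.prod_range_succ']
      simp only [Function.iterate_succ_apply, Function.iterate_zero_apply]
      calc _ ≤ contractionRate a b ^ ((N + 1) / 2) * contractionRate a b := by
            refine mul_le_mul (prod_abs_iterate_fhat_le_of_mem_Icc hab ha1 ha hb (N + 1) hfx) ?_
              (abs_nonneg _) (by positivity)
            rw [abs_of_pos hx0]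
            exact hx.2.trans (le_max_right _ _)
        _ ≤ contractionRate a b ^ ((N + 2) / 2) := by
            rw [← pow_succ]; exact pow_le_pow_of_le_one hc0 hc1 (by omega)

lemma prod_abs_iterate_fhat_le (hab : -(a * b) ≤ 1) (ha1 : -1 ≤ a) (ha : a < 0) (hb : 1 ≤ b)
    (N : ℕ) {x : ℝ} (hx : x ∈ Ico a b) :
    ∏ k ∈ Finset.range (N + 1), |(fhat a b)^[k] x| ≤ b * contractionRate a b ^ (N / 2) := by
  have hc0 : 0 ≤ contractionRate a b := contractionRate_nonneg (by linarith)
  have hc1 : contractionRate a b ≤ 1 := (contractionRate_lt_one ha (by linarith)).le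
  rcases lt_or_ge x 0 with hx0 | hx0
  · calc _ ≤ contractionRate a b ^ ((N + 1) / 2) :=
          prod_abs_iterate_fhat_le_of_mem_Icc hab ha1 ha hb (N + 1) ⟨hx.1, by linarith⟩
      _ ≤ contractionRate a b ^ (N / 2) := pow_le_pow_of_le_one hc0 hc1 (by omega)
      _ ≤ b * contractionRate a b ^ (N / 2) := le_mul_of_one_le_left (by positivity) hb
  · rw [Finset.prod_range_succ', mul_comm]
    simp only [Function.iterate_succ_apply, Function.iterate_zero_apply]
    exact mul_le_mul (by rw [abs_of_nonneg hx0]; exact hx.2.le)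
      (prod_abs_iterate_fhat_le_of_mem_Icc hab ha1 ha hb N
        (fhat_mem_Icc_of_mem_Ico hab ha1 ha ⟨hx0, hx.2⟩))
      (Finset.prod_nonneg fun _ _ => abs_nonneg _) (by linarith)

end

theorem stmt15 (a b : ℝ) (hP : memP a b) (ha1 : -1 ≤ a) (ha : a < 0) (hb : 1 ≤ b) :
    ∃ (N : ℕ) (γ : ℝ), 1 ≤ N ∧ 1 < γ ∧
      ∀ x ∈ Set.Ioo a b, DifferentiableAt ℝ ((fhat a b)^[N]) x →
        γ ≤ |deriv ((fhat a b)^[N]) x| := by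
  obtain ⟨-, -, -, hab⟩ := hP
  obtain ⟨m, hm⟩ := exists_pow_lt_of_lt_one (by positivity : (0 : ℝ) < 1 / (2 * b))
    (contractionRate_lt_one ha (by linarith))
  have hbound : b * contractionRate a b ^ m ≤ 1 / 2 := by
    rw [lt_div_iff₀ (by positivity)] at hm
    nlinarith
  refine ⟨2 * m + 1, 4, by omega, by norm_num, fun x hx hdiff => ?_⟩
  by_cases horbit : ∀ k < 2 * m + 1, (fhat a b)^[k] x ≠ 0
  · refine (le_of_hasDerivAt_of_eventually_nhdsGT hdiff.hasDerivAt ?_).trans (le_abs_self _)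
    filter_upwards [eventually_hasDerivAt_iterate_fhat horbit, Ioo_mem_nhdsGT hx.2]
      with t ⟨hne, hderiv⟩ ht
    refine ⟨hderiv.differentiableAt,
      hderiv.deriv ▸ four_le_prod_inv_sq (fun k hk => hne k (Finset.mem_range.1 hk)) ?_⟩
    have hprod := prod_abs_iterate_fhat_le hab ha1 ha hb (2 * m) ⟨hx.1.le.trans ht.1.le, ht.2⟩
    rw [Nat.mul_div_cancel_left m two_pos] at hprod
    exact hprod.trans hbound
  · push Not at horbit
    obtain ⟨k, hk, hk0⟩ := horbit
    exact absurd hdiff.continuousAt.continuousWithinAt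
      (not_continuousWithinAt_iterate_fhat_of_iterate_eq_zero ha.le hk0 hk)
end
end

section
/- Let m ≥ 1 be an integer and let (a,b) ∈ 𝒫 satisfy a < 0 < b, 1 ≤ −1/a ≤ b + 1, and a ≤ −1/b + m ≤ a + 1. Define c₁ = b − 1 and c_{p+1} = −1/c_p − 2 for 1 ≤ p ≤ m − 1. Define h⁺ on [a,b) by: h⁺(x) = 1/(x + (p+1)/p) for c_p ≤ x < c_{p+1} (1 ≤ p ≤ m−1), h⁺(x) = 1/(x + (m+1)/m) for c_m ≤ x < −1/a − 1, h⁺(x) = 1/(x + 1) for −1/a − 1 ≤ x < b, and h⁺(x) = 0 for a ≤ x < c₁. Define h⁻ on [a,b) by: h⁻(x) = 1/(m − x) for a ≤ x < −1/b + m, h⁻(x) = 1/(m + 1 − x) for −1/b + m ≤ x < a + 1, and h⁻(x) = 0 for a + 1 ≤ x < b. Set h_{a,b} = h⁺ + h⁻. Then ∫_a^b h_{a,b}(x) dx = log((m − a)(1 + b)^{2−m}). -/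
/-!
On each of its pieces `h_{a,b}` is `t ↦ 1/(t + c)` or `t ↦ 1/(c - t)`, so its integral is a sum of
differences of logarithms. As long as `p b < 1`, which `-1/b + m ≤ a + 1` and `a < 0` guarantee for
`p ≤ m - 1`, the recursion for `c_p` has the closed form `c_{p+1} = ((p+1) b - 1)/(1 - p b)`. Hence
`c_p + (p+1)/p = (1+b)/(p (1 - (p-1) b))` and `c_{p+1} + (p+1)/p = 1/(p (1 - p b))`, so the
integrals of the pieces of `h⁺` on `[c_p, c_{p+1})` telescope to
`-log (1 - (m-1) b) - (m-1) log (1+b)`.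
Adding the last two pieces gives `∫ h⁺ = log (m - a) - (m-1) log (1+b)`, while the two pieces of
`h⁻` contribute `log (1+b)`.
-/

open MeasureTheory Filter Set

noncomputable section

section IndicatorIntegrals

variable {a b l u c : ℝ}

theorem intervalIntegrable_indicator_Ico {f : ℝ → ℝ} (hal : a ≤ l) (hlu : l ≤ u) (hub : u ≤ b)
    (hf : ContinuousOn f (Icc l u)) :
    IntervalIntegrable (indicator (Ico l u) f) volume a b := by
  rw [intervalIntegrable_iff_integrableOn_Ioc_of_le (hal.trans (hlu.trans hub)), IntegrableOn,
    integrable_indicator_iff measurableSet_Ico]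
  exact (hf.integrableOn_Icc.mono_set Ico_subset_Icc_self).restrict

theorem intervalIntegral_indicator_Ico {f : ℝ → ℝ} (hal : a ≤ l) (hlu : l ≤ u) (hub : u ≤ b) :
    ∫ x in a..b, indicator (Ico l u) f x = ∫ x in l..u, f x := by
  rw [intervalIntegral.integral_of_le (hal.trans (hlu.trans hub)),
    intervalIntegral.integral_of_le hlu, setIntegral_indicator measurableSet_Ico]
  refine setIntegral_congr_set ?_
  rw [← inter_eq_self_of_subset_right (Ioc_subset_Ioc hal hub)]
  exact (EventuallyEq.refl _ _).inter Ico_ae_eq_Ioc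

theorem intervalIntegrable_indicator_Ico_one_div_add (hal : a ≤ l) (hlu : l ≤ u) (hub : u ≤ b)
    (hc : 0 < l + c) :
    IntervalIntegrable (indicator (Ico l u) fun t => 1 / (t + c)) volume a b :=
  intervalIntegrable_indicator_Ico hal hlu hub <|
    continuousOn_const.div (by fun_prop) fun t ht => by linarith [ht.1]

theorem intervalIntegrable_indicator_Ico_one_div_sub (hal : a ≤ l) (hlu : l ≤ u) (hub : u ≤ b)
    (hc : 0 < c - u) :
    IntervalIntegrable (indicator (Ico l u) fun t => 1 / (c - t)) volume a b :=
  intervalIntegrable_indicator_Ico hal hlu hub <|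
    continuousOn_const.div (by fun_prop) fun t ht => by linarith [ht.2]

theorem integral_indicator_Ico_one_div_add (hal : a ≤ l) (hlu : l ≤ u) (hub : u ≤ b)
    (hc : 0 < l + c) :
    ∫ x in a..b, indicator (Ico l u) (fun t => 1 / (t + c)) x =
      Real.log (u + c) - Real.log (l + c) := by
  rw [intervalIntegral_indicator_Ico hal hlu hub,
    intervalIntegral.integral_comp_add_right (fun x => 1 / x), integral_one_div,
    Real.log_div (by linarith) hc.ne']
  rw [uIcc_of_le (by linarith)]
  exact fun h => hc.not_ge h.1

theorem integral_indicator_Ico_one_div_sub (hal : a ≤ l) (hlu : l ≤ u) (hub : u ≤ b)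
    (hc : 0 < c - u) :
    ∫ x in a..b, indicator (Ico l u) (fun t => 1 / (c - t)) x =
      Real.log (c - l) - Real.log (c - u) := by
  rw [intervalIntegral_indicator_Ico hal hlu hub,
    intervalIntegral.integral_comp_sub_left (fun x => 1 / x), integral_one_div,
    Real.log_div (by linarith) hc.ne']
  rw [uIcc_of_le (by linarith)]
  exact fun h => hc.not_ge h.1

end IndicatorIntegrals

section Cseq

variable {b : ℝ}

theorem cseq_eq (hb : 0 ≤ b) {j : ℕ} (hj : (j : ℝ) * b < 1) :
    cseq b j = (((j : ℝ) + 1) * b - 1) / (1 - j * b) := by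
  induction j with
  | zero => simp [cseq]
  | succ j ih =>
    push_cast at hj ⊢
    have hjb : (j : ℝ) * b < 1 := by nlinarith
    have hne : ((j : ℝ) + 1) * b - 1 ≠ 0 := by linarith
    have hne' : 1 - (j : ℝ) * b ≠ 0 := by linarith
    rw [cseq, ih hjb, div_div_eq_mul_div, div_sub' hne, div_eq_div_iff hne (by linarith)]
    ring

theorem monotoneOn_cseq (hb : 0 ≤ b) {n : ℕ} (hn : (n : ℝ) * b < 1) :
    MonotoneOn (cseq b) (Iic n) := by
  intro i hi j hj hij
  have hij' : (i : ℝ) ≤ j := by exact_mod_cast hij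
  have hjn : (j : ℝ) ≤ n := by exact_mod_cast hj
  have hjb : (j : ℝ) * b < 1 := by nlinarith
  have hib : (i : ℝ) * b < 1 := by nlinarith
  rw [cseq_eq hb hib, cseq_eq hb hjb, div_le_div_iff₀ (by linarith) (by linarith)]
  nlinarith [mul_nonneg (sub_nonneg.2 hij') (mul_nonneg hb hb)]

theorem cseq_sub_one_add_div (hb : 0 ≤ b) {p : ℕ} (hp : 1 ≤ p) (hpb : ((p : ℝ) - 1) * b < 1) :
    cseq b (p - 1) + ((p : ℝ) + 1) / p = (1 + b) / (p * (1 - (p - 1) * b)) := by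
  obtain ⟨j, rfl⟩ : ∃ j, p = j + 1 := ⟨p - 1, by omega⟩
  push_cast at hpb ⊢
  simp only [add_sub_cancel_right] at hpb ⊢
  have hne : 1 - (j : ℝ) * b ≠ 0 := by linarith
  rw [cseq_eq hb hpb]
  field_simp
  ring

theorem cseq_add_div (hb : 0 ≤ b) {p : ℕ} (hp : 1 ≤ p) (hpb : (p : ℝ) * b < 1) :
    cseq b p + ((p : ℝ) + 1) / p = 1 / (p * (1 - p * b)) := by
  have hp' : (p : ℝ) ≠ 0 := by positivity
  have hne : 1 - (p : ℝ) * b ≠ 0 := by linarith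
  have hne' : (p : ℝ) * b - 1 ≠ 0 := by linarith
  rw [cseq_eq hb hpb]
  field_simp
  ring

theorem sub_one_sub_mul_le_one {a x : ℝ} (hb : 0 < b) (h : -1 / b + x ≤ a + 1) :
    (x - 1 - a) * b ≤ 1 := by
  rw [div_add' _ _ _ hb.ne', div_le_iff₀ hb] at h
  linarith

theorem sub_one_mul_lt_one {a x : ℝ} (ha : a < 0) (hb : 0 < b) (h : -1 / b + x ≤ a + 1) :
    (x - 1) * b < 1 := by
  nlinarith [sub_one_sub_mul_le_one hb h]

theorem cseq_sub_one_le_neg_inv_sub_one {a : ℝ} (ha : a < 0) (hb : 0 < b) {m : ℕ} (hm : 1 ≤ m)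
    (h : -1 / b + m ≤ a + 1) : cseq b (m - 1) ≤ -1 / a - 1 := by
  have hm' : ((m - 1 : ℕ) : ℝ) = m - 1 := by rw [Nat.cast_sub hm, Nat.cast_one]
  have h' := sub_one_sub_mul_le_one hb h
  have hmb := sub_one_mul_lt_one ha hb h
  have ha' : -1 / a - 1 = (1 + a) / -a := by field_simp [ha.ne]; ring
  rw [cseq_eq hb.le (by rwa [hm']), hm', ha', div_le_div_iff₀ (by linarith) (by linarith)]
  nlinarith

end Cseq

section HPlus

variable {a b : ℝ} {m n p : ℕ}

def hplusTerm (b : ℝ) (p : ℕ) (x : ℝ) : ℝ :=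
  indicator (Ico (cseq b (p - 1)) (cseq b p)) (fun t => 1 / (t + ((p : ℝ) + 1) / p)) x

theorem cseq_bounds (hab : a ≤ b - 1) (hb : 0 ≤ b) (hn : (n : ℝ) * b < 1) (hcb : cseq b n ≤ b)
    (hpn : p ≤ n) : a ≤ cseq b (p - 1) ∧ cseq b (p - 1) ≤ cseq b p ∧ cseq b p ≤ b := by
  have hmono := monotoneOn_cseq hb hn
  have mem : ∀ {k}, k ≤ p → k ∈ Iic n := fun hk => mem_Iic.2 (hk.trans hpn)
  exact ⟨hab.trans (hmono (mem (Nat.zero_le _)) (mem (Nat.sub_le p 1)) (Nat.zero_le _)),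
    hmono (mem (Nat.sub_le p 1)) (mem le_rfl) (Nat.sub_le p 1),
    (hmono (mem le_rfl) self_mem_Iic hpn).trans hcb⟩

theorem intervalIntegrable_hplusTerm (hab : a ≤ b - 1) (hb : 0 ≤ b) (hn : (n : ℝ) * b < 1)
    (hcb : cseq b n ≤ b) (hp : p ∈ Finset.Icc 1 n) :
    IntervalIntegrable (hplusTerm b p) volume a b := by
  obtain ⟨hp, hpn⟩ := Finset.mem_Icc.1 hp
  obtain ⟨h₁, h₂, h₃⟩ := cseq_bounds hab hb hn hcb hpn
  have hpn' : (p : ℝ) ≤ n := by exact_mod_cast hpn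
  have hpb : 0 < 1 - ((p : ℝ) - 1) * b := by nlinarith
  refine intervalIntegrable_indicator_Ico_one_div_add h₁ h₂ h₃ ?_
  rw [cseq_sub_one_add_div hb hp (by linarith)]
  positivity

theorem integral_hplusTerm (hab : a ≤ b - 1) (hb : 0 ≤ b) (hn : (n : ℝ) * b < 1)
    (hcb : cseq b n ≤ b) (hp : p ∈ Finset.Icc 1 n) :
    ∫ x in a..b, hplusTerm b p x =
      Real.log (1 - ((p : ℝ) - 1) * b) - Real.log (1 - p * b) - Real.log (1 + b) := by
  obtain ⟨hp, hpn⟩ := Finset.mem_Icc.1 hp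
  obtain ⟨h₁, h₂, h₃⟩ := cseq_bounds hab hb hn hcb hpn
  have hpn' : (p : ℝ) ≤ n := by exact_mod_cast hpn
  have hp' : (0 : ℝ) < p := by exact_mod_cast hp
  have hpb : 0 < 1 - (p : ℝ) * b := by nlinarith
  have hpb' : 0 < 1 - ((p : ℝ) - 1) * b := by nlinarith
  have hc : 0 < cseq b (p - 1) + ((p : ℝ) + 1) / p := by
    rw [cseq_sub_one_add_div hb hp (by linarith)]; positivity
  unfold hplusTerm
  rw [integral_indicator_Ico_one_div_add h₁ h₂ h₃ hc, cseq_add_div hb hp (by linarith),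
    cseq_sub_one_add_div hb hp (by linarith),
    Real.log_div one_ne_zero (by positivity), Real.log_div (by positivity) (by positivity),
    Real.log_mul hp'.ne' hpb.ne', Real.log_mul hp'.ne' hpb'.ne', Real.log_one]
  ring

theorem integral_sum_hplusTerm (hab : a ≤ b - 1) (hb : 0 ≤ b) (hn : (n : ℝ) * b < 1)
    (hcb : cseq b n ≤ b) :
    ∫ x in a..b, ∑ p ∈ Finset.Icc 1 n, hplusTerm b p x =
      -Real.log (1 - n * b) - n * Real.log (1 + b) := by
  rw [intervalIntegral.integral_finsetSum fun p => intervalIntegrable_hplusTerm hab hb hn hcb,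
    Finset.sum_congr rfl fun p => integral_hplusTerm hab hb hn hcb]
  clear hn hcb
  induction n with
  | zero => simp
  | succ k ih =>
    rw [Finset.sum_Icc_succ_top (by omega), ih]
    push_cast
    ring_nf

theorem intervalIntegrable_hplus_and_integral_eq (hm : 1 ≤ m) (ha : a < 0) (hab : a ≤ b - 1)
    (hb : 0 ≤ b) (hmb : ((m : ℝ) - 1) * b < 1) (hcm : cseq b (m - 1) ≤ -1 / a - 1)
    (ha₁ : -1 / a - 1 ≤ b) :
    IntervalIntegrable (hplus a b m) volume a b ∧
      ∫ x in a..b, hplus a b m x = Real.log (m - a) - (m - 1) * Real.log (1 + b) := by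
  have hm' : ((m - 1 : ℕ) : ℝ) = m - 1 := by rw [Nat.cast_sub hm, Nat.cast_one]
  have hn : ((m - 1 : ℕ) : ℝ) * b < 1 := by rwa [hm']
  have hcb := hcm.trans ha₁
  have hac := cseq_bounds hab hb hn hcb le_rfl
  have hac' := hac.1.trans hac.2.1
  have hm₀ : (0 : ℝ) < m := by exact_mod_cast hm
  have hmb' : 0 < 1 - ((m : ℝ) - 1) * b := by linarith
  have hinva : 0 < -1 / a := div_pos_of_neg_of_neg (by norm_num) ha
  have hlA : 0 < cseq b (m - 1) + ((m : ℝ) + 1) / m := by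
    rw [cseq_sub_one_add_div hb hm hmb]; positivity
  have hlB : 0 < -1 / a - 1 + 1 := by linarith
  have hsum : IntervalIntegrable (fun x => ∑ p ∈ Finset.Icc 1 (m - 1), hplusTerm b p x)
      volume a b := by
    simpa only [← Finset.sum_apply] using
      IntervalIntegrable.sum _ fun p => intervalIntegrable_hplusTerm hab hb hn hcb
  have hA := intervalIntegrable_indicator_Ico_one_div_add hac' hcm ha₁ hlA
  have hB := intervalIntegrable_indicator_Ico_one_div_add (hac'.trans hcm) ha₁ le_rfl hlB
  refine ⟨(hsum.add hA).add hB, ?_⟩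
  simp only [hplus, ← hplusTerm.eq_1]
  rw [intervalIntegral.integral_add (hsum.add hA) hB, intervalIntegral.integral_add hsum hA,
    integral_sum_hplusTerm hab hb hn hcb, integral_indicator_Ico_one_div_add hac' hcm ha₁ hlA,
    integral_indicator_Ico_one_div_add (hac'.trans hcm) ha₁ le_rfl hlB,
    cseq_sub_one_add_div hb hm hmb, hm']
  have huA : -1 / a - 1 + ((m : ℝ) + 1) / m = (m - a) / (-a * m) := by
    field_simp [ha.ne]; ring
  rw [huA, show -1 / a - 1 + 1 = (-a)⁻¹ by field_simp [ha.ne]; ring,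
    Real.log_div (by linarith) (by nlinarith), Real.log_div (by positivity) (by positivity),
    Real.log_mul (by linarith) hm₀.ne', Real.log_mul hm₀.ne' hmb'.ne', Real.log_inv, add_comm b 1]
  ring

end HPlus

theorem intervalIntegrable_hminus_and_integral_eq {a b : ℝ} {m : ℕ} (hb : 0 < b)
    (h₁ : a ≤ -1 / b + m) (h₂ : -1 / b + m ≤ a + 1) (hab : a + 1 ≤ b) :
    IntervalIntegrable (hminus a b m) volume a b ∧
      ∫ x in a..b, hminus a b m x = Real.log (1 + b) := by
  have hC : (m : ℝ) - (-1 / b + m) = b⁻¹ := by ring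
  have hD : (m : ℝ) + 1 - (-1 / b + m) = (1 + b) / b := by field_simp; ring
  have hD' : (m : ℝ) + 1 - (a + 1) = m - a := by ring
  have hma : 0 < (m : ℝ) - a := by
    have : -1 / b < 0 := div_neg_of_neg_of_pos (by norm_num) hb
    linarith
  have hcC : 0 < (m : ℝ) - (-1 / b + m) := by rw [hC]; positivity
  have hcD : 0 < (m : ℝ) + 1 - (a + 1) := by rwa [hD']
  have hub : -1 / b + m ≤ b := h₂.trans hab
  have iC := intervalIntegrable_indicator_Ico_one_div_sub le_rfl h₁ hub hcC
  have iD := intervalIntegrable_indicator_Ico_one_div_sub h₁ h₂ hab hcD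
  refine ⟨iC.add iD, ?_⟩
  simp only [hminus]
  rw [intervalIntegral.integral_add iC iD, integral_indicator_Ico_one_div_sub le_rfl h₁ hub hcC,
    integral_indicator_Ico_one_div_sub h₁ h₂ hab hcD, hC, hD, hD', Real.log_inv,
    Real.log_div (by positivity) hb.ne']
  ring

theorem stmt18_general (a b : ℝ) (m : ℕ) (hm : 1 ≤ m) (hP : memP a b) (ha : a < 0) (hb : 0 < b)
    (h2 : -1 / a ≤ b + 1) (h3 : a ≤ -1 / b + m) (h4 : -1 / b + m ≤ a + 1) :
    ∫ x in a..b, (hplus a b m x + hminus a b m x) =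
      Real.log (((m : ℝ) - a) * (1 + b) ^ (2 - (m : ℤ))) := by
  have hab : a ≤ b - 1 := by linarith [hP.2.2.1]
  obtain ⟨hplus_int, hplus_eq⟩ := intervalIntegrable_hplus_and_integral_eq hm ha hab hb.le
    (sub_one_mul_lt_one ha hb h4) (cseq_sub_one_le_neg_inv_sub_one ha hb hm h4) (by linarith)
  obtain ⟨hminus_int, hminus_eq⟩ :=
    intervalIntegrable_hminus_and_integral_eq hb h3 h4 (by linarith)
  rw [intervalIntegral.integral_add hplus_int hminus_int, hplus_eq, hminus_eq,
    Real.log_mul (by linarith) (by positivity), Real.log_zpow]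
  push_cast
  ring

theorem stmt18 (a b : ℝ) (m : ℕ) (hm : 1 ≤ m) (hP : memP a b) (ha : a < 0) (hb : 0 < b)
    (h1 : 1 ≤ -1 / a) (h2 : -1 / a ≤ b + 1) (h3 : a ≤ -1 / b + m) (h4 : -1 / b + m ≤ a + 1) :
    ∫ x in a..b, (hplus a b m x + hminus a b m x) =
      Real.log (((m : ℝ) - a) * (1 + b) ^ (2 - (m : ℤ))) :=
  stmt18_general a b m hm hP ha hb h2 h3 h4
end
end
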